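/- Fix a real number ε with 0 < ε < 1/8, set α_n = ⌊n^{1/2+ε}⌋, β_n = ⌊n^{1/4+2ε}⌋, γ_n = ⌊n^{1/8+4ε}⌋, λ_n = ⌊n^{1/8+5ε}⌋, u_n = a^{α_n}, v_n = u_n (b u_n)^{β_n}, and w_n = v_n (bb v_n)^{γ_n}. Let f : [n] → [n] be a fixed mapping (the a-transitions) with cyclic set C, having at most α_n cyclic points and height at most α_n. Let β be a fixed partial b-transition function defined exactly on the set S = C ∪ {β(x) : x ∈ Cyc(F)}, where F : C → C is the map F(x) = f^{α_n}(β(x)), such that: F has at most β_n cyclic points and height at most β_n; for every F-cyclic q, β(q) ∉ C; the map G on Cyc(F) induced by reading bb v_n (i.e., G(q) = δ_{v_n}(β(β(q))) computed using f for a-transitions and β for b-transitions) has at most γ_n cyclic points and height at most γ_n; and for every G-cyclic q, β(β(q)) ∉ S. Extend β to a total function b : [n] → [n] by choosing b(x) uniformly at random and independently in [n] for every x ∉ S, and let δ be the complete automaton with δ_a = f and δ_b = b. Then for any two G-cyclic states p and q, the probability that δ_{b^j w_n}(p) ≠ δ_{b^j w_n}(q) for every j ∈ {0, 1, …, λ_n}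 is at most 6 n^{−3/8+5ε}, for n large enough. -/

import Mathlib

/-!
Reading `w_n` from any state only applies `b` inside `S`, where it is `β`, and ends at a
`G`-cyclic state, so `δ_{b^j w_n} = W ∘ δ_{b^j}` for a map `W` that does not depend on the random
completion and takes at most `γ_n` values. From `p` and `q` the `b`-chains leave `S` after two
steps and then follow the random values. While both chains keep reaching new points outside `S`,
each step reads two fresh uniform values, which `W` keeps apart with probability at most
`1 - 1/γ_n` (by Cauchy–Schwarz, at least a `1/γ_n` fraction of all pairs are collisions of `W`);
a step that is not fresh has probability `O((|S| + λ_n)/n)`. Hence the failure probability is at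
most `(1 - 1/γ_n)^(λ_n - 2) + O((|S| + λ_n) γ_n / n) = O(n^(-3/8+5ε))`.
-/

open Classical

/-- The two-letter alphabet `{a, b}`. -/
inductive Letter
  | a
  | b
deriving DecidableEq

instance : Fintype Letter := ⟨{Letter.a, Letter.b}, by intro x; cases x <;> simp⟩

/-- The action of a word on the states of a deterministic complete automaton:
`act δ w q` is the state reached from `q` after reading the word `w`
(first letter applied first, so that `δ_{wc} = δ_c ∘ δ_w`). -/
def act {n : ℕ} {A : Type*} (δ : Fin n → A → Fin n) : List A → Fin n → Fin n
  | [], q => q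
  | c :: w, q => act δ w (δ q c)

/-- A point `x` is cyclic for `f` if some positive iterate of `f` sends `x` to itself. -/
def IsCyclicPt {n : ℕ} (f : Fin n → Fin n) (x : Fin n) : Prop :=
  ∃ i > 0, f^[i] x = x

/-- The set of cyclic points of a mapping `f` on `[n]`. -/
noncomputable def cyclicPts {n : ℕ} (f : Fin n → Fin n) : Finset (Fin n) :=
  Finset.univ.filter (IsCyclicPt f)

/-- The height of a point `x`: the least `i ≥ 0` such that `f^[i] x` is cyclic. -/
noncomputable def heightOf {n : ℕ} (f : Fin n → Fin n) (x : Fin n) : ℕ :=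
  sInf {i : ℕ | IsCyclicPt f (f^[i] x)}

/-- The height of a mapping: the maximal height of a point. -/
noncomputable def height {n : ℕ} (f : Fin n → Fin n) : ℕ :=
  Finset.univ.sup (heightOf f)

/-- `α_n = ⌊n^(1/2+ε)⌋`. -/
noncomputable def alphaN (ε : ℝ) (n : ℕ) : ℕ := ⌊(n : ℝ) ^ ((1 : ℝ)/2 + ε)⌋₊

/-- `β_n = ⌊n^(1/4+2ε)⌋`. -/
noncomputable def betaN (ε : ℝ) (n : ℕ) : ℕ := ⌊(n : ℝ) ^ ((1 : ℝ)/4 + 2*ε)⌋₊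

/-- `γ_n = ⌊n^(1/8+4ε)⌋`. -/
noncomputable def gammaN (ε : ℝ) (n : ℕ) : ℕ := ⌊(n : ℝ) ^ ((1 : ℝ)/8 + 4*ε)⌋₊

/-- The word `u_n = a^{α_n}`. -/
noncomputable def uWord (ε : ℝ) (n : ℕ) : List Letter :=
  List.replicate (alphaN ε n) Letter.a

/-- The word `v_n = u_n (b u_n)^{β_n}`. -/
noncomputable def vWord (ε : ℝ) (n : ℕ) : List Letter :=
  uWord ε n ++ (List.replicate (betaN ε n) (Letter.b :: uWord ε n)).flatten

/-- The word `w_n = v_n (bb v_n)^{γ_n}`. -/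
noncomputable def wWord (ε : ℝ) (n : ℕ) : List Letter :=
  vWord ε n ++ (List.replicate (gammaN ε n) (Letter.b :: Letter.b :: vWord ε n)).flatten

/-- `λ_n = ⌊n^(1/8+5ε)⌋`. -/
noncomputable def lambdaN (ε : ℝ) (n : ℕ) : ℕ := ⌊(n : ℝ) ^ ((1 : ℝ)/8 + 5*ε)⌋₊

/-- The automaton whose `a`-transitions are `f` and whose `b`-transitions are `b`. -/
def mkAut {n : ℕ} (f b : Fin n → Fin n) : Fin n → Letter → Fin n :=
  fun q l => match l with
    | Letter.a => f q
    | Letter.b => b q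

/-- The map `F(x) = f^[α_n](β(x))` (whose restriction to `Cyc(f)` is the map `F` of the
construction). -/
noncomputable def Fmap (ε : ℝ) {n : ℕ} (f β : Fin n → Fin n) : Fin n → Fin n :=
  fun x => f^[alphaN ε n] (β x)

/-- The set `Cyc(F)` of `F`-cyclic states. -/
noncomputable def CycF (ε : ℝ) {n : ℕ} (f β : Fin n → Fin n) : Finset (Fin n) :=
  (cyclicPts f).filter (IsCyclicPt (Fmap ε f β))

/-- The set `S = C ∪ {β(x) : x ∈ Cyc(F)}` on which the partial `b`-transition function
`β` is defined. -/
noncomputable def Sset (ε : ℝ) {n : ℕ} (f β : Fin n → Fin n) : Finset (Fin n) :=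
  cyclicPts f ∪ (CycF ε f β).image β

/-- The map `G(q) = δ_{v_n}(β(β(q)))`, computed using `f` for the `a`-transitions and `β`
for the `b`-transitions (its restriction to `Cyc(F)` is the map `G` of the
construction). -/
noncomputable def Gmap (ε : ℝ) {n : ℕ} (f β : Fin n → Fin n) : Fin n → Fin n :=
  fun q => act (mkAut f β) (vWord ε n) (β (β q))

/-- The complete automaton obtained by extending the partial `b`-transition function `β`
(defined on `S`) by the values of `c` outside of `S`. -/
noncomputable def extAut (ε : ℝ) {n : ℕ} (f β c : Fin n → Fin n) : Fin n → Letter → Fin n :=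
  mkAut f (fun x => if x ∈ Sset ε f β then β x else c x)

open Finset Function

section Words

variable {n : ℕ} {A : Type*} (δ : Fin n → A → Fin n)

theorem act_append (w₁ w₂ : List A) (q : Fin n) :
    act δ (w₁ ++ w₂) q = act δ w₂ (act δ w₁ q) := by
  induction w₁ generalizing q with
  | nil => rfl
  | cons c w ih => exact ih _

theorem act_replicate (c : A) (k : ℕ) : act δ (List.replicate k c) = (δ · c)^[k] := by
  induction k with
  | zero => rfl
  | succ k ih => funext q; exact congrFun ih (δ q c)

theorem act_flatten_replicate (w : List A) (k : ℕ) :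
    act δ (List.replicate k w).flatten = (act δ w)^[k] := by
  induction k with
  | zero => rfl
  | succ k ih =>
    funext q
    rw [List.replicate_succ, List.flatten_cons, act_append, ih, iterate_succ_apply]

end Words

theorem iterate_apply_eq_of_eqOn_orbit {α : Type*} {f g : α → α} {x : α} {k : ℕ}
    (h : ∀ i < k, g (f^[i] x) = f (f^[i] x)) : g^[k] x = f^[k] x := by
  induction k with
  | zero => rfl
  | succ k ih =>
    rw [iterate_succ_apply', iterate_succ_apply', ih fun i hi => h i (by omega),
      h k k.lt_succ_self]

theorem Set.EqOn.iterate_apply_eq {α : Type*} {f g : α → α} {T : Set α}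
    (hf : Set.MapsTo f T T) (hgf : Set.EqOn g f T) {x : α} (hx : x ∈ T) (k : ℕ) :
    g^[k] x = f^[k] x :=
  iterate_apply_eq_of_eqOn_orbit fun i _ => hgf (hf.iterate i hx)

section CyclicPoints

variable {n : ℕ} {f : Fin n → Fin n}

theorem IsCyclicPt.iterate {x : Fin n} (h : IsCyclicPt f x) (k : ℕ) : IsCyclicPt f (f^[k] x) :=
  let ⟨i, hi, hx⟩ := h
  ⟨i, hi, IsPeriodicPt.apply_iterate hx k⟩

theorem exists_isCyclicPt_iterate (f : Fin n → Fin n) (x : Fin n) :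
    ∃ i, IsCyclicPt f (f^[i] x) := by
  obtain ⟨i, j, hne, hij⟩ := Finite.exists_ne_map_eq_of_infinite (fun k : ℕ => f^[k] x)
  wlog hlt : i < j generalizing i j
  · exact this j i hne.symm hij.symm (by omega)
  exact ⟨i, j - i, by omega, by
    rw [← iterate_add_apply, Nat.sub_add_cancel hlt.le]; exact hij.symm⟩

theorem isCyclicPt_iterate_of_heightOf_le {x : Fin n} {k : ℕ} (h : heightOf f x ≤ k) :
    IsCyclicPt f (f^[k] x) := by
  have hx : IsCyclicPt f (f^[heightOf f x] x) := Nat.sInf_mem (exists_isCyclicPt_iterate f x)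
  have := hx.iterate (k - heightOf f x)
  rwa [← iterate_add_apply, Nat.sub_add_cancel h] at this

end CyclicPoints

section Construction

variable (ε : ℝ) {n : ℕ} {f β g : Fin n → Fin n}

theorem act_mkAut_replicate_a (k : ℕ) : act (mkAut f g) (List.replicate k Letter.a) = f^[k] :=
  act_replicate _ _ _

theorem act_mkAut_replicate_b (k : ℕ) : act (mkAut f g) (List.replicate k Letter.b) = g^[k] :=
  act_replicate _ _ _

theorem iterate_alphaN_mem_cyclicPts (hf : height f ≤ alphaN ε n) (s : Fin n) :
    f^[alphaN ε n] s ∈ cyclicPts f :=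
  mem_filter.2 ⟨mem_univ _, isCyclicPt_iterate_of_heightOf_le ((le_sup (mem_univ s)).trans hf)⟩

theorem act_b_uWord (hg : Set.EqOn g β (cyclicPts f)) {x : Fin n} (hx : x ∈ cyclicPts f) :
    act (mkAut f g) (Letter.b :: uWord ε n) x = Fmap ε f β x := by
  change act (mkAut f g) (uWord ε n) (g x) = _
  rw [uWord, act_mkAut_replicate_a, hg hx, Fmap]

theorem act_vWord (hg : Set.EqOn g β (cyclicPts f)) (hf : height f ≤ alphaN ε n)
    (hF : Set.MapsTo (Fmap ε f β) (cyclicPts f) (cyclicPts f)) (s : Fin n) :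
    act (mkAut f g) (vWord ε n) s = (Fmap ε f β)^[betaN ε n] (f^[alphaN ε n] s) := by
  rw [vWord, act_append, act_flatten_replicate, uWord, act_mkAut_replicate_a]
  exact Set.EqOn.iterate_apply_eq hF (fun x hx => act_b_uWord ε hg hx)
    (iterate_alphaN_mem_cyclicPts ε hf s) _

theorem iterate_betaN_mem_CycF (hf : height f ≤ alphaN ε n)
    (hF : Set.MapsTo (Fmap ε f β) (cyclicPts f) (cyclicPts f))
    (hFh : (cyclicPts f).sup (heightOf (Fmap ε f β)) ≤ betaN ε n) (s : Fin n) :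
    (Fmap ε f β)^[betaN ε n] (f^[alphaN ε n] s) ∈ CycF ε f β := by
  have hs := iterate_alphaN_mem_cyclicPts ε hf s
  exact mem_filter.2
    ⟨hF.iterate _ hs, isCyclicPt_iterate_of_heightOf_le ((le_sup hs).trans hFh)⟩

theorem act_bb_vWord (hg : Set.EqOn g β (Sset ε f β)) (hf : height f ≤ alphaN ε n)
    (hF : Set.MapsTo (Fmap ε f β) (cyclicPts f) (cyclicPts f)) {x : Fin n}
    (hx : x ∈ CycF ε f β) :
    act (mkAut f g) (Letter.b :: Letter.b :: vWord ε n) x = Gmap ε f β x := by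
  have hgC : Set.EqOn g β (cyclicPts f) := hg.mono (coe_subset.2 subset_union_left)
  change act (mkAut f g) (vWord ε n) (g (g x)) = act (mkAut f β) (vWord ε n) (β (β x))
  rw [hg (mem_union_left _ (mem_filter.1 hx).1), hg (mem_union_right _ (mem_image_of_mem β hx)),
    act_vWord ε hgC hf hF, act_vWord ε (Set.eqOn_refl _ _) hf hF]

theorem act_wWord (hg : Set.EqOn g β (Sset ε f β)) (hf : height f ≤ alphaN ε n)
    (hF : Set.MapsTo (Fmap ε f β) (cyclicPts f) (cyclicPts f))
    (hFh : (cyclicPts f).sup (heightOf (Fmap ε f β)) ≤ betaN ε n)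
    (hG : Set.MapsTo (Gmap ε f β) (CycF ε f β) (CycF ε f β)) (s : Fin n) :
    act (mkAut f g) (wWord ε n) s =
      (Gmap ε f β)^[gammaN ε n] ((Fmap ε f β)^[betaN ε n] (f^[alphaN ε n] s)) := by
  rw [wWord, act_append, act_flatten_replicate,
    act_vWord ε (hg.mono (coe_subset.2 subset_union_left)) hf hF]
  exact Set.EqOn.iterate_apply_eq hG (fun x hx => act_bb_vWord ε hg hf hF hx)
    (iterate_betaN_mem_CycF ε hf hF hFh s) _

theorem act_wWord_mem (hf : height f ≤ alphaN ε n)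
    (hF : Set.MapsTo (Fmap ε f β) (cyclicPts f) (cyclicPts f))
    (hFh : (cyclicPts f).sup (heightOf (Fmap ε f β)) ≤ betaN ε n)
    (hG : Set.MapsTo (Gmap ε f β) (CycF ε f β) (CycF ε f β))
    (hGh : (CycF ε f β).sup (heightOf (Gmap ε f β)) ≤ gammaN ε n) (s : Fin n) :
    act (mkAut f β) (wWord ε n) s ∈ (CycF ε f β).filter (IsCyclicPt (Gmap ε f β)) := by
  have hs := iterate_betaN_mem_CycF ε hf hF hFh s
  rw [act_wWord ε (Set.eqOn_refl _ _) hf hF hFh hG]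
  exact mem_filter.2
    ⟨hG.iterate _ hs, isCyclicPt_iterate_of_heightOf_le ((le_sup hs).trans hGh)⟩

theorem card_Sset_le (hC : #(cyclicPts f) ≤ alphaN ε n) (hCycF : #(CycF ε f β) ≤ betaN ε n) :
    #(Sset ε f β) ≤ alphaN ε n + betaN ε n :=
  (card_union_le _ _).trans (add_le_add hC (card_image_le.trans hCycF))

end Construction

section PairCounting

variable {α ι : Type*} [Fintype α]

theorem sq_card_le_card_image_mul_card_collisions [DecidableEq ι] (W : α → ι) :
    Fintype.card α ^ 2 ≤ #(univ.image W) * #(univ.filter fun st : α × α => W st.1 = W st.2) := by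
  set fiber : ι → Finset α := fun z => univ.filter (W · = z)
  have hpairs : ∀ z, (univ.filter fun st : α × α => W st.1 = W st.2).filter
      (fun st => W st.1 = z) = fiber z ×ˢ fiber z := by
    intro z
    ext ⟨s, t⟩
    simp only [fiber, mem_filter, mem_product, mem_univ, true_and]
    constructor
    · rintro ⟨hst, rfl⟩; exact ⟨rfl, hst.symm⟩
    · rintro ⟨rfl, hts⟩; exact ⟨hts.symm, rfl⟩
  calc Fintype.card α ^ 2 = (∑ z ∈ univ.image W, #(fiber z)) ^ 2 := by
        rw [← card_eq_sum_card_image, card_univ]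
    _ ≤ #(univ.image W) * ∑ z ∈ univ.image W, #(fiber z) ^ 2 := sq_sum_le_card_mul_sum_sq
    _ = _ := by
        rw [card_eq_sum_card_fiberwise (f := fun st : α × α => W st.1) (t := univ.image W)
          fun st _ => mem_image_of_mem W (mem_univ _)]
        exact congrArg _ (sum_congr rfl fun z _ => by rw [hpairs, card_product, sq])

theorem card_pairs_ne_le [DecidableEq ι] (W : α → ι) {γ : ℕ} (hγ : 0 < γ)
    (hW : #(univ.image W) ≤ γ) :
    (#(univ.filter fun st : α × α => W st.1 ≠ W st.2) : ℝ) ≤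
      (1 - 1 / γ) * Fintype.card α ^ 2 := by
  set collisions := univ.filter fun st : α × α => W st.1 = W st.2
  have hsplit : (#collisions : ℝ) + #(univ.filter fun st : α × α => W st.1 ≠ W st.2) =
      Fintype.card α ^ 2 := by
    have := card_filter_add_card_filter_not (s := univ) (fun st : α × α => W st.1 = W st.2)
    rw [card_univ, Fintype.card_prod, ← sq] at this
    exact_mod_cast this
  have hcoll : (Fintype.card α ^ 2 : ℝ) ≤ γ * #collisions := by
    exact_mod_cast (sq_card_le_card_image_mul_card_collisions W).trans
      (Nat.mul_le_mul_right _ hW)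
  have hcoll' : (Fintype.card α ^ 2 : ℝ) / γ ≤ #collisions := by
    rw [div_le_iff₀ (by exact_mod_cast hγ)]; linarith
  calc _ ≤ (Fintype.card α ^ 2 : ℝ) - Fintype.card α ^ 2 / γ := by linarith
    _ = _ := by ring

theorem card_pairs_mem_or_eq_le [DecidableEq α] (A : Finset α) :
    #(univ.filter fun st : α × α => st.1 ∈ A ∨ st.2 ∈ A ∨ st.1 = st.2) ≤
      (2 * #A + 1) * Fintype.card α := by
  calc _ ≤ #(A ×ˢ univ ∪ univ ×ˢ A ∪ (univ : Finset α).diag) := card_le_card fun st hst => by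
        simp only [mem_filter, mem_univ, true_and] at hst
        simp only [mem_union, mem_product, mem_diag, mem_univ, and_true, true_and]
        tauto
    _ ≤ #(A ×ˢ (univ : Finset α)) + #((univ : Finset α) ×ˢ A) + #(univ : Finset α).diag :=
        (card_union_le _ _).trans (Nat.add_le_add_right (card_union_le _ _) _)
    _ = _ := by rw [card_product, card_product, diag_card, card_univ]; ring

end PairCounting

section RandomCompletion

variable {α : Type*} [DecidableEq α] (S : Finset α) (β : α → α)

def chain (c : α → α) (z : α) (k : ℕ) : α := (S.piecewise β c)^[k] z

variable {S β}

theorem chain_succ_of_notMem {c : α → α} {z : α} {k : ℕ} (h : chain S β c z k ∉ S) :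
    chain S β c z (k + 1) = c (chain S β c z k) := by
  rw [chain, iterate_succ_apply', ← chain, piecewise_eq_of_notMem _ _ _ h]

theorem chain_congr {c c' : α → α} {z : α} {k : ℕ}
    (h : ∀ i < k, c' (chain S β c z i) = c (chain S β c z i)) :
    chain S β c' z k = chain S β c z k :=
  iterate_apply_eq_of_eqOn_orbit fun i hi => by
    have := h i hi
    rw [chain] at this
    simp only [piecewise, this]

variable (S β) (x₀ y₀ : α)

def visited (c : α → α) (k : ℕ) : Finset α :=
  (range k).image (chain S β c x₀) ∪ (range k).image (chain S β c y₀)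

def IsFreshStep (c : α → α) (k : ℕ) : Prop :=
  chain S β c x₀ k ∉ S ∪ visited S β x₀ y₀ c k ∧
    chain S β c y₀ k ∉ S ∪ visited S β x₀ y₀ c k ∧ chain S β c x₀ k ≠ chain S β c y₀ k

def resample (c : α → α) (k : ℕ) (a b : α) : α → α :=
  update (update c (chain S β c x₀ k) a) (chain S β c y₀ k) b

variable {S β x₀ y₀}

theorem card_visited_le (c : α → α) (k : ℕ) : #(visited S β x₀ y₀ c k) ≤ 2 * k := by
  have h₁ := card_image_le (s := range k) (f := chain S β c x₀)
  have h₂ := card_image_le (s := range k) (f := chain S β c y₀)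
  rw [card_range] at h₁ h₂
  exact (card_union_le _ _).trans (by omega)

theorem chain_mem_visited {c : α → α} {z : α} {i k : ℕ} (hz : z = x₀ ∨ z = y₀) (hi : i < k) :
    chain S β c z i ∈ visited S β x₀ y₀ c k := by
  rcases hz with rfl | rfl
  · exact mem_union_left _ (mem_image_of_mem _ (mem_range.2 hi))
  · exact mem_union_right _ (mem_image_of_mem _ (mem_range.2 hi))

theorem isFreshStep_zero (hx₀ : x₀ ∉ S) (hy₀ : y₀ ∉ S) (hxy : x₀ ≠ y₀) (c : α → α) :
    IsFreshStep S β x₀ y₀ c 0 := by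
  simp [IsFreshStep, visited, chain, hx₀, hy₀, hxy]

section Resample

variable {c : α → α} {k : ℕ} {a b : α}

theorem resample_apply_of_mem_visited (hc : IsFreshStep S β x₀ y₀ c k) {x : α}
    (hx : x ∈ visited S β x₀ y₀ c k) : resample S β x₀ y₀ c k a b x = c x := by
  rw [resample, update_of_ne, update_of_ne]
  · rintro rfl; exact hc.1 (mem_union_right _ hx)
  · rintro rfl; exact hc.2.1 (mem_union_right _ hx)

theorem chain_resample (hc : IsFreshStep S β x₀ y₀ c k) {z : α} (hz : z = x₀ ∨ z = y₀) {i : ℕ}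
    (hi : i ≤ k) : chain S β (resample S β x₀ y₀ c k a b) z i = chain S β c z i :=
  chain_congr fun j hj => resample_apply_of_mem_visited hc (chain_mem_visited hz (by omega))

theorem visited_resample (hc : IsFreshStep S β x₀ y₀ c k) {j : ℕ} (hj : j ≤ k + 1) :
    visited S β x₀ y₀ (resample S β x₀ y₀ c k a b) j = visited S β x₀ y₀ c j := by
  unfold visited
  congr 1 <;> refine image_congr fun i hi => chain_resample hc ?_ (by rw [coe_range, Set.mem_Iio] at hi; omega)
  exacts [.inl rfl, .inr rfl]

theorem isFreshStep_resample_iff (hc : IsFreshStep S β x₀ y₀ c k) {i : ℕ} (hi : i ≤ k) :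
    IsFreshStep S β x₀ y₀ (resample S β x₀ y₀ c k a b) i ↔ IsFreshStep S β x₀ y₀ c i := by
  rw [IsFreshStep, IsFreshStep, chain_resample hc (.inl rfl) hi,
    chain_resample hc (.inr rfl) hi, visited_resample hc (by omega)]

theorem resample_apply_fst (hc : IsFreshStep S β x₀ y₀ c k) :
    resample S β x₀ y₀ c k a b (chain S β c x₀ k) = a := by
  rw [resample, update_of_ne hc.2.2, update_self]

theorem resample_apply_snd : resample S β x₀ y₀ c k a b (chain S β c y₀ k) = b :=
  update_self _ _ _

theorem resample_resample (hc : IsFreshStep S β x₀ y₀ c k) :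
    resample S β x₀ y₀ (resample S β x₀ y₀ c k a b) k (c (chain S β c x₀ k))
      (c (chain S β c y₀ k)) = c := by
  rw [resample, chain_resample hc (.inl rfl) le_rfl, chain_resample hc (.inr rfl) le_rfl,
    resample]
  funext x
  simp only [update_apply]
  split_ifs <;> simp_all

end Resample

variable [Fintype α] {ι : Type*} [DecidableEq ι] (W : α → ι)

variable (S β x₀ y₀)

noncomputable def unsynced (m : ℕ) : Finset (α → α) :=
  univ.filter fun c => ∀ k ≤ m, W (chain S β c x₀ k) ≠ W (chain S β c y₀ k)

noncomputable def freshUnsynced (k : ℕ) : Finset (α → α) :=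
  univ.filter fun c => ∀ i ≤ k,
    IsFreshStep S β x₀ y₀ c i ∧ W (chain S β c x₀ i) ≠ W (chain S β c y₀ i)

noncomputable def staleAfter (k : ℕ) : Finset (α → α) :=
  (freshUnsynced S β x₀ y₀ W k).filter fun c => ¬IsFreshStep S β x₀ y₀ c (k + 1)

variable {S β x₀ y₀}

theorem mem_freshUnsynced {c : α → α} {k : ℕ} :
    c ∈ freshUnsynced S β x₀ y₀ W k ↔
      ∀ i ≤ k, IsFreshStep S β x₀ y₀ c i ∧ W (chain S β c x₀ i) ≠ W (chain S β c y₀ i) := by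
  simp [freshUnsynced]

theorem resample_mem_freshUnsynced {c : α → α} {k : ℕ} (hc : c ∈ freshUnsynced S β x₀ y₀ W k)
    (a b : α) : resample S β x₀ y₀ c k a b ∈ freshUnsynced S β x₀ y₀ W k := by
  rw [mem_freshUnsynced] at hc ⊢
  have hk := (hc k le_rfl).1
  intro i hi
  rw [isFreshStep_resample_iff hk hi, chain_resample hk (.inl rfl) hi,
    chain_resample hk (.inr rfl) hi]
  exact hc i hi

/-- Resampling `c` at the two current points of the chains, and recording the old values there,
is an involution of `freshUnsynced k × α × α`: given the past, the next pair of values read by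
the chains is uniform. -/
theorem card_filter_freshUnsynced_mul_le (k : ℕ) (P : (α → α) → α × α → Prop)
    [∀ c, DecidablePred (P c)]
    (hP : ∀ c ∈ freshUnsynced S β x₀ y₀ W k, ∀ a b, P (resample S β x₀ y₀ c k a b) = P c)
    {B : ℕ} (hB : ∀ c ∈ freshUnsynced S β x₀ y₀ W k, #(univ.filter (P c)) ≤ B) :
    #((freshUnsynced S β x₀ y₀ W k).filter
        fun c => P c (c (chain S β c x₀ k), c (chain S β c y₀ k))) * Fintype.card α ^ 2 ≤
      #(freshUnsynced S β x₀ y₀ W k) * B := by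
  set D := freshUnsynced S β x₀ y₀ W k
  set E := D.filter fun c => P c (c (chain S β c x₀ k), c (chain S β c y₀ k))
  let swap : (α → α) × α × α → (α → α) × α × α := fun z =>
    (resample S β x₀ y₀ z.1 k z.2.1 z.2.2, z.1 (chain S β z.1 x₀ k), z.1 (chain S β z.1 y₀ k))
  have hswap : ∀ z ∈ D ×ˢ (univ : Finset (α × α)), swap (swap z) = z := by
    rintro ⟨c, a, b⟩ hz
    have hc := ((mem_freshUnsynced W).1 (mem_product.1 hz).1 k le_rfl).1
    simp only [swap, chain_resample hc (.inl rfl) le_rfl, chain_resample hc (.inr rfl) le_rfl,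
      resample_resample hc, resample_apply_fst hc, resample_apply_snd]
  have hmaps : Set.MapsTo swap ↑(E ×ˢ (univ : Finset (α × α)))
      ↑((D ×ˢ univ).filter fun z => P z.1 z.2) := by
    rintro ⟨c, a, b⟩ hz
    obtain ⟨hcD, hcP⟩ := mem_filter.1 (mem_product.1 hz).1
    refine mem_filter.2 ⟨mem_product.2 ⟨resample_mem_freshUnsynced W hcD a b, mem_univ _⟩, ?_⟩
    simpa only [swap, hP c hcD a b] using hcP
  have hinj : Set.InjOn swap ↑(E ×ˢ (univ : Finset (α × α))) := by
    intro z₁ h₁ z₂ h₂ h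
    rw [← hswap z₁ (product_subset_product_left (filter_subset _ _) h₁),
      ← hswap z₂ (product_subset_product_left (filter_subset _ _) h₂), h]
  calc #E * Fintype.card α ^ 2 = #(E ×ˢ (univ : Finset (α × α))) := by
        rw [card_product, card_univ, Fintype.card_prod, sq]
    _ ≤ #((D ×ˢ univ).filter fun z => P z.1 z.2) := card_le_card_of_injOn swap hmaps hinj
    _ = ∑ c ∈ D, #(univ.filter (P c)) := by simp only [card_filter, sum_product]
    _ ≤ #D * B := by simpa using sum_le_card_nsmul D _ B hB

theorem card_freshUnsynced_succ_mul_le (k : ℕ) :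
    #(freshUnsynced S β x₀ y₀ W (k + 1)) * Fintype.card α ^ 2 ≤
      #(freshUnsynced S β x₀ y₀ W k) * #(univ.filter fun st : α × α => W st.1 ≠ W st.2) := by
  refine le_trans (Nat.mul_le_mul_right _ (card_le_card ?_))
    (card_filter_freshUnsynced_mul_le W k (fun _ st => W st.1 ≠ W st.2)
      (fun _ _ _ _ => rfl) (fun _ _ => le_rfl))
  intro c hc
  rw [mem_freshUnsynced] at hc
  have hk := (hc k k.le_succ).1
  refine mem_filter.2 ⟨(mem_freshUnsynced W).2 fun i hi => hc i (hi.trans k.le_succ), ?_⟩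
  rw [← chain_succ_of_notMem fun h => hk.1 (mem_union_left _ h),
    ← chain_succ_of_notMem fun h => hk.2.1 (mem_union_left _ h)]
  exact (hc (k + 1) le_rfl).2

theorem card_staleAfter_mul_le (k : ℕ) :
    #(staleAfter S β x₀ y₀ W k) * Fintype.card α ^ 2 ≤
      #(freshUnsynced S β x₀ y₀ W k) * ((2 * (#S + 2 * (k + 1)) + 1) * Fintype.card α) := by
  refine le_trans (Nat.mul_le_mul_right _ (card_le_card ?_))
    (card_filter_freshUnsynced_mul_le W k (fun c st =>
      st.1 ∈ S ∪ visited S β x₀ y₀ c (k + 1) ∨ st.2 ∈ S ∪ visited S β x₀ y₀ c (k + 1) ∨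
        st.1 = st.2) ?_ ?_)
  · intro c hc
    obtain ⟨hcD, hstale⟩ := mem_filter.1 hc
    have hk := ((mem_freshUnsynced W).1 hcD k le_rfl).1
    rw [IsFreshStep, chain_succ_of_notMem fun h => hk.1 (mem_union_left _ h),
      chain_succ_of_notMem fun h => hk.2.1 (mem_union_left _ h)] at hstale
    exact mem_filter.2 ⟨hcD, by tauto⟩
  · intro c hc a b
    rw [visited_resample ((mem_freshUnsynced W).1 hc k le_rfl).1 le_rfl]
  · intro c _
    have := card_visited_le (S := S) (β := β) (x₀ := x₀) (y₀ := y₀) c (k + 1)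
    have := card_union_le S (visited S β x₀ y₀ c (k + 1))
    exact (card_pairs_mem_or_eq_le _).trans (Nat.mul_le_mul_right _ (by omega))

theorem card_freshUnsynced_le {γ : ℕ} (hγ : 0 < γ) (hW : #(univ.image W) ≤ γ) (k : ℕ) :
    (#(freshUnsynced S β x₀ y₀ W k) : ℝ) ≤ (1 - 1 / γ) ^ k * Fintype.card (α → α) := by
  induction k with
  | zero => rw [pow_zero, one_mul]; exact_mod_cast card_le_univ _
  | succ k ih =>
    have hα : (0 : ℝ) < Fintype.card α ^ 2 := by
      have : 0 < Fintype.card α := Fintype.card_pos_iff.2 ⟨x₀⟩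
      positivity
    have hr : (0 : ℝ) ≤ 1 - 1 / γ := by
      rw [sub_nonneg, div_le_one (by exact_mod_cast hγ)]; exact_mod_cast hγ
    have hstep : (#(freshUnsynced S β x₀ y₀ W (k + 1)) : ℝ) * Fintype.card α ^ 2 ≤
        #(freshUnsynced S β x₀ y₀ W k) * (1 - 1 / γ) * Fintype.card α ^ 2 := by
      rw [mul_assoc]
      calc _ ≤ (#(freshUnsynced S β x₀ y₀ W k) : ℝ) *
            #(univ.filter fun st : α × α => W st.1 ≠ W st.2) := by
            exact_mod_cast card_freshUnsynced_succ_mul_le W k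
        _ ≤ _ := by gcongr; exact card_pairs_ne_le W hγ hW
    calc _ ≤ (#(freshUnsynced S β x₀ y₀ W k) : ℝ) * (1 - 1 / γ) :=
          le_of_mul_le_mul_right hstep hα
      _ ≤ (1 - 1 / γ) ^ k * Fintype.card (α → α) * (1 - 1 / γ) := by gcongr
      _ = _ := by ring

theorem card_staleAfter_le {k m : ℕ} (hk : k < m) :
    (#(staleAfter S β x₀ y₀ W k) : ℝ) ≤
      (2 * #S + 4 * m + 1) / Fintype.card α * #(freshUnsynced S β x₀ y₀ W k) := by
  have hα : (0 : ℝ) < Fintype.card α := by exact_mod_cast Fintype.card_pos_iff.2 ⟨x₀⟩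
  have h : (#(staleAfter S β x₀ y₀ W k) : ℝ) * Fintype.card α * Fintype.card α ≤
      #(freshUnsynced S β x₀ y₀ W k) * (2 * (#S + 2 * (k + 1)) + 1) * Fintype.card α := by
    rw [mul_assoc _ (Fintype.card α : ℝ), ← sq, mul_assoc]
    exact_mod_cast card_staleAfter_mul_le W k
  have : (k : ℝ) + 1 ≤ m := by exact_mod_cast hk
  rw [div_mul_eq_mul_div, le_div_iff₀ hα]
  refine le_of_mul_le_mul_right (h.trans ?_) hα
  rw [mul_comm (2 * (#S : ℝ) + 4 * m + 1)]
  gcongr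
  linarith

theorem unsynced_subset (hx₀ : x₀ ∉ S) (hy₀ : y₀ ∉ S) (hxy : x₀ ≠ y₀) (m : ℕ) :
    unsynced S β x₀ y₀ W m ⊆
      freshUnsynced S β x₀ y₀ W m ∪ (range m).biUnion (staleAfter S β x₀ y₀ W) := by
  intro c hc
  replace hc := (mem_filter.1 hc).2
  induction m with
  | zero =>
    refine mem_union_left _ ((mem_freshUnsynced W).2 fun i hi => ?_)
    obtain rfl := Nat.le_zero.1 hi
    exact ⟨isFreshStep_zero hx₀ hy₀ hxy c, hc 0 le_rfl⟩
  | succ m ih =>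
    rcases mem_union.1 (ih fun k hk => hc k (hk.trans m.le_succ)) with hD | hstale
    · by_cases hfresh : IsFreshStep S β x₀ y₀ c (m + 1)
      · refine mem_union_left _ ((mem_freshUnsynced W).2 fun i hi => ?_)
        rcases Nat.of_le_succ hi with hi | rfl
        exacts [(mem_freshUnsynced W).1 hD i hi, ⟨hfresh, hc _ le_rfl⟩]
      · exact mem_union_right _
          (mem_biUnion.2 ⟨m, self_mem_range_succ m, mem_filter.2 ⟨hD, hfresh⟩⟩)
    · exact mem_union_right _ (biUnion_subset_biUnion_of_subset_left _
        (range_subset_range.2 m.le_succ) hstale)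

theorem card_unsynced_le (hx₀ : x₀ ∉ S) (hy₀ : y₀ ∉ S) {γ : ℕ} (hγ : 0 < γ)
    (hW : #(univ.image W) ≤ γ) (m : ℕ) :
    (#(unsynced S β x₀ y₀ W m) : ℝ) ≤
      ((1 - 1 / γ) ^ m + (2 * #S + 4 * m + 1) * γ / Fintype.card α) *
        Fintype.card (α → α) := by
  have hγ' : (0 : ℝ) < γ := by exact_mod_cast hγ
  have hr : (0 : ℝ) ≤ 1 - 1 / γ := by
    rw [sub_nonneg, div_le_one hγ']; exact_mod_cast hγ
  obtain rfl | hxy := eq_or_ne x₀ y₀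
  · rw [unsynced, filter_false_of_mem fun c _ h => h 0 (Nat.zero_le _) rfl, card_empty,
      Nat.cast_zero]
    positivity
  have hgeom : ∑ k ∈ range m, (1 - 1 / (γ : ℝ)) ^ k ≤ γ := by
    rw [range_eq_Ico]
    refine (geom_sum_Ico_le_of_lt_one hr (by simpa using hγ')).trans_eq ?_
    field_simp
    ring
  set N : ℝ := (Fintype.card (α → α) : ℝ)
  set B : ℝ := (2 * #S + 4 * m + 1) / Fintype.card α
  calc _ ≤ (#(freshUnsynced S β x₀ y₀ W m) : ℝ) +
        ∑ k ∈ range m, (#(staleAfter S β x₀ y₀ W k) : ℝ) := by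
        exact_mod_cast (card_le_card (unsynced_subset W hx₀ hy₀ hxy m)).trans
          ((card_union_le _ _).trans (Nat.add_le_add_left card_biUnion_le _))
    _ ≤ (1 - 1 / γ) ^ m * N + ∑ k ∈ range m, B * ((1 - 1 / γ) ^ k * N) := by
        gcongr with k hk
        · exact card_freshUnsynced_le W hγ hW m
        · exact (card_staleAfter_le W (mem_range.1 hk)).trans
            (by gcongr; exact card_freshUnsynced_le W hγ hW k)
    _ = (1 - 1 / γ) ^ m * N + B * N * ∑ k ∈ range m, (1 - 1 / (γ : ℝ)) ^ k := by
        rw [mul_sum]; congr 1; exact sum_congr rfl fun k _ => by ring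
    _ ≤ (1 - 1 / γ) ^ m * N + B * N * γ := by gcongr
    _ = _ := by ring

end RandomCompletion

theorem act_extAut_replicate_append_wWord (ε : ℝ) {n : ℕ} {f β : Fin n → Fin n}
    (hf : height f ≤ alphaN ε n) (hF : Set.MapsTo (Fmap ε f β) (cyclicPts f) (cyclicPts f))
    (hFh : (cyclicPts f).sup (heightOf (Fmap ε f β)) ≤ betaN ε n)
    (hG : Set.MapsTo (Gmap ε f β) (CycF ε f β) (CycF ε f β)) {p : Fin n}
    (hp : p ∈ CycF ε f β) (c : Fin n → Fin n) (k : ℕ) :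
    act (extAut ε f β c) (List.replicate (k + 2) Letter.b ++ wWord ε n) p =
      act (mkAut f β) (wWord ε n) (chain (Sset ε f β) β c (β (β p)) k) := by
  have hg : Set.EqOn ((Sset ε f β).piecewise β c) β (Sset ε f β) := fun x hx =>
    piecewise_eq_of_mem _ _ _ hx
  have hpS : p ∈ Sset ε f β := mem_union_left _ (mem_filter.1 hp).1
  have hβpS : β p ∈ Sset ε f β := mem_union_right _ (mem_image_of_mem β hp)
  have hchain : ((Sset ε f β).piecewise β c)^[k + 2] p =
      chain (Sset ε f β) β c (β (β p)) k := by
    rw [chain, iterate_add_apply]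
    congr 1
    change (Sset ε f β).piecewise β c ((Sset ε f β).piecewise β c p) = _
    rw [hg hpS, hg hβpS]
  change act (mkAut f ((Sset ε f β).piecewise β c)) _ p = _
  rw [act_append, act_mkAut_replicate_b, act_wWord ε hg hf hF hFh hG,
    act_wWord ε (Set.eqOn_refl _ _) hf hF hFh hG, hchain]

section Asymptotics

open Filter Real

theorem tendsto_natCast_rpow_atTop {δ : ℝ} (hδ : 0 < δ) :
    Tendsto (fun n : ℕ => (n : ℝ) ^ δ) atTop atTop :=
  (tendsto_rpow_atTop hδ).comp tendsto_natCast_atTop_atTop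

theorem eventually_const_mul_rpow_le {δ δ' : ℝ} (h : δ < δ') (C : ℝ) :
    ∀ᶠ n : ℕ in atTop, C * (n : ℝ) ^ δ ≤ (n : ℝ) ^ δ' := by
  filter_upwards [(tendsto_natCast_rpow_atTop (sub_pos.2 h)).eventually_ge_atTop C,
    eventually_gt_atTop 0] with n hC hn
  calc C * (n : ℝ) ^ δ ≤ (n : ℝ) ^ (δ' - δ) * (n : ℝ) ^ δ := by gcongr
    _ = _ := by rw [← rpow_add (by exact_mod_cast hn), sub_add_cancel]

theorem eventually_log_add_le_rpow {ε : ℝ} (hε : 0 < ε) (C : ℝ) :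
    ∀ᶠ n : ℕ in atTop, log n + C ≤ (n : ℝ) ^ ε := by
  filter_upwards [tendsto_natCast_atTop_atTop.eventually
      ((isLittleO_log_rpow_atTop hε).bound (by norm_num : (0 : ℝ) < 1 / 2)),
    (tendsto_natCast_rpow_atTop hε).eventually_ge_atTop (2 * C)] with n hlog hC
  rw [norm_eq_abs, norm_eq_abs, abs_of_nonneg (rpow_nonneg n.cast_nonneg ε)] at hlog
  linarith [le_abs_self (log n)]

theorem one_sub_inv_pow_le_inv {γ x : ℝ} {m : ℕ} (hγ : 1 ≤ γ) (hx : 0 < x)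
    (h : γ * log x ≤ m) : (1 - 1 / γ) ^ m ≤ x⁻¹ := by
  have hγ0 : 0 < γ := by linarith
  calc (1 - 1 / γ) ^ m ≤ exp (-(1 / γ)) ^ m := by
        refine pow_le_pow_left₀ ?_ (by linarith [add_one_le_exp (-(1 / γ))]) m
        rw [sub_nonneg, div_le_one hγ0]; exact hγ
    _ = exp (-(m / γ)) := by rw [← exp_nat_mul]; ring_nf
    _ ≤ exp (-log x) := exp_le_exp.2 (by rw [neg_le_neg_iff, le_div_iff₀ hγ0]; linarith)
    _ = x⁻¹ := by rw [exp_neg, exp_log hx]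

theorem eventually_pair_bound {ε : ℝ} (hε0 : 0 < ε) (hε : 5 * ε < 3 / 8) :
    ∀ᶠ n : ℕ in atTop, 0 < gammaN ε n ∧ 2 ≤ lambdaN ε n ∧ ∀ s ≤ alphaN ε n + betaN ε n,
      (1 - 1 / (gammaN ε n : ℝ)) ^ (lambdaN ε n - 2) +
        (2 * s + 4 * ↑(lambdaN ε n - 2) + 1) * gammaN ε n / n ≤
        6 * (n : ℝ) ^ (-(3 / 8 : ℝ) + 5 * ε) := by
  filter_upwards [eventually_ge_atTop 1,
    eventually_const_mul_rpow_le (show (1 : ℝ) / 4 + 2 * ε < 1 / 2 + ε by linarith) 2,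
    eventually_const_mul_rpow_le (show (1 : ℝ) / 8 + 5 * ε < 1 / 2 + ε by linarith) 5,
    eventually_const_mul_rpow_le (show (0 : ℝ) < 1 / 8 + 5 * ε by linarith) 3,
    eventually_log_add_le_rpow hε0 3] with n hn h₁ h₂ h₃ h₄
  rw [rpow_zero, mul_one] at h₃
  have hx : (1 : ℝ) ≤ n := by exact_mod_cast hn
  set x : ℝ := (n : ℝ)
  have hx0 : 0 < x := by linarith
  have hγ : (gammaN ε n : ℝ) ≤ x ^ ((1 : ℝ) / 8 + 4 * ε) := Nat.floor_le (by positivity)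
  have hγ1 : 1 ≤ gammaN ε n :=
    Nat.le_floor (by simpa using one_le_rpow hx (by linarith : (0 : ℝ) ≤ 1 / 8 + 4 * ε))
  have hlam : x ^ ((1 : ℝ) / 8 + 5 * ε) - 1 < lambdaN ε n := by
    have := Nat.lt_floor_add_one (x ^ ((1 : ℝ) / 8 + 5 * ε))
    rw [lambdaN]; linarith
  have hlam' : (lambdaN ε n : ℝ) ≤ x ^ ((1 : ℝ) / 8 + 5 * ε) := Nat.floor_le (by positivity)
  have hlam2 : 2 ≤ lambdaN ε n := by
    have : (2 : ℝ) < lambdaN ε n := by linarith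
    exact_mod_cast this.le
  refine ⟨hγ1, hlam2, fun s hs => ?_⟩
  have hm : ((lambdaN ε n - 2 : ℕ) : ℝ) = lambdaN ε n - 2 := by push_cast [hlam2]; ring
  have hterm₁ : (1 - 1 / (gammaN ε n : ℝ)) ^ (lambdaN ε n - 2) ≤
      x ^ (-(3 / 8 : ℝ) + 5 * ε) := by
    refine (one_sub_inv_pow_le_inv (by exact_mod_cast hγ1) hx0 ?_).trans ?_
    · have hsplit : x ^ ((1 : ℝ) / 8 + 5 * ε) = x ^ ((1 : ℝ) / 8 + 4 * ε) * x ^ ε := by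
        rw [← rpow_add hx0]; ring_nf
      have hγ' : (1 : ℝ) ≤ x ^ ((1 : ℝ) / 8 + 4 * ε) := one_le_rpow hx (by linarith)
      rw [hm]
      calc (gammaN ε n : ℝ) * log x ≤ x ^ ((1 : ℝ) / 8 + 4 * ε) * log x := by gcongr
        _ ≤ x ^ ((1 : ℝ) / 8 + 4 * ε) * (x ^ ε - 3) := by gcongr; linarith
        _ ≤ _ := by nlinarith
    · rw [← rpow_neg_one]; exact rpow_le_rpow_of_exponent_le hx (by linarith)
  have hs' : (s : ℝ) ≤ x ^ ((1 : ℝ) / 2 + ε) + x ^ ((1 : ℝ) / 4 + 2 * ε) := by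
    have hα : (alphaN ε n : ℝ) ≤ x ^ ((1 : ℝ) / 2 + ε) := Nat.floor_le (by positivity)
    have hβ : (betaN ε n : ℝ) ≤ x ^ ((1 : ℝ) / 4 + 2 * ε) := Nat.floor_le (by positivity)
    have : (s : ℝ) ≤ alphaN ε n + betaN ε n := by exact_mod_cast hs
    linarith
  have hterm₂ : (2 * s + 4 * ((lambdaN ε n - 2 : ℕ) : ℝ) + 1) * gammaN ε n / x ≤
      4 * x ^ (-(3 / 8 : ℝ) + 5 * ε) := by
    have hexp : x ^ ((1 : ℝ) / 2 + ε) * x ^ ((1 : ℝ) / 8 + 4 * ε) =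
        x ^ (-(3 / 8 : ℝ) + 5 * ε) * x := by
      rw [← rpow_add hx0, ← rpow_add_one hx0.ne']; ring_nf
    rw [div_le_iff₀ hx0, mul_assoc, ← hexp, ← mul_assoc]
    gcongr
    rw [hm]; linarith
  have : 0 ≤ x ^ (-(3 / 8 : ℝ) + 5 * ε) := by positivity
  linarith

end Asymptotics

theorem synchronize_pair_bound_general (ε : ℝ) (hε0 : 0 < ε) :
    ∃ N : ℕ, ∀ n ≥ N, ∀ f β : Fin n → Fin n, ∀ p q : Fin n,
      (cyclicPts f).card ≤ alphaN ε n →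
      height f ≤ alphaN ε n →
      (∀ x ∈ cyclicPts f, Fmap ε f β x ∈ cyclicPts f) →
      (CycF ε f β).card ≤ betaN ε n →
      (cyclicPts f).sup (heightOf (Fmap ε f β)) ≤ betaN ε n →
      (∀ x ∈ CycF ε f β, β x ∉ cyclicPts f) →
      (∀ x ∈ CycF ε f β, Gmap ε f β x ∈ CycF ε f β) →
      ((CycF ε f β).filter (IsCyclicPt (Gmap ε f β))).card ≤ gammaN ε n →
      (CycF ε f β).sup (heightOf (Gmap ε f β)) ≤ gammaN ε n →
      (∀ x ∈ (CycF ε f β).filter (IsCyclicPt (Gmap ε f β)), β (β x) ∉ Sset ε f β) →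
      p ∈ (CycF ε f β).filter (IsCyclicPt (Gmap ε f β)) →
      q ∈ (CycF ε f β).filter (IsCyclicPt (Gmap ε f β)) →
      (((Finset.univ : Finset (Fin n → Fin n)).filter
          (fun c => ∀ j ≤ lambdaN ε n,
            act (extAut ε f β c) (List.replicate j Letter.b ++ wWord ε n) p ≠
            act (extAut ε f β c) (List.replicate j Letter.b ++ wWord ε n) q)).card : ℝ)
        / (Fintype.card (Fin n → Fin n) : ℝ)
        ≤ 6 * (n : ℝ) ^ (-(3/8 : ℝ) + 5*ε) := by
  rcases le_or_gt (3 / 8 : ℝ) (5 * ε) with hε | hε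
  · refine ⟨1, fun n hn f β p q _ _ _ _ _ _ _ _ _ _ _ _ => ?_⟩
    have := Real.one_le_rpow (x := n) (by exact_mod_cast hn)
      (by linarith : 0 ≤ -(3 / 8 : ℝ) + 5 * ε)
    exact (div_le_one_of_le₀ (by exact_mod_cast card_le_univ _) (by positivity)).trans
      (by linarith)
  obtain ⟨N, hN⟩ := Filter.eventually_atTop.1 (eventually_pair_bound hε0 hε)
  refine ⟨N, fun n hn f β p q hC hf hF hCycF hFh _ hG hCycG hGh hS hp hq => ?_⟩
  obtain ⟨hγ, hlam, hbound⟩ := hN n hn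
  set W := act (mkAut f β) (wWord ε n)
  have hW : #(univ.image W) ≤ gammaN ε n := (card_le_card (image_subset_iff.2 fun s _ =>
    act_wWord_mem ε hf hF hFh hG hGh s)).trans hCycG
  rw [div_le_iff₀ (by exact_mod_cast Fintype.card_pos_iff.2 ⟨id⟩)]
  calc _ ≤ (#(unsynced (Sset ε f β) β (β (β p)) (β (β q)) W (lambdaN ε n - 2)) : ℝ) := by
        refine Nat.cast_le.2 (card_le_card fun c hc => mem_filter.2 ⟨mem_univ _, fun k hk => ?_⟩)
        simpa only [act_extAut_replicate_append_wWord ε hf hF hFh hG (mem_filter.1 hp).1,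
          act_extAut_replicate_append_wWord ε hf hF hFh hG (mem_filter.1 hq).1] using
          (mem_filter.1 hc).2 (k + 2) (by omega)
    _ ≤ _ := card_unsynced_le W (hS p hp) (hS q hq) hγ hW _
    _ ≤ _ := by
        rw [Fintype.card_fin]
        gcongr
        exact hbound _ (card_Sset_le ε hC hCycF)

/-- For `0 < ε < 1/8`, for `n` large enough: fix an `a`-transition mapping `f` with at
most `α_n` cyclic points and height at most `α_n`, and a (partial) `b`-transition
function `β` defined on `S = C ∪ β(Cyc(F))` such that `F` has at most `β_n` cyclic points
and height at most `β_n`, `β(q) ∉ C` for every `F`-cyclic `q`, the induced map `G` on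
`Cyc(F)` maps `Cyc(F)` into itself with at most `γ_n` cyclic points and height at most
`γ_n`, and `β(β(q)) ∉ S` for every `G`-cyclic `q`. If the remaining `b`-transitions are
chosen uniformly at random and independently in `[n]`, then for any two `G`-cyclic states
`p` and `q`, the probability that `δ_{b^j w_n}(p) ≠ δ_{b^j w_n}(q)` for every
`j ∈ {0, …, λ_n}` is at most `6 n^(-3/8+5ε)`. -/
theorem synchronize_pair_bound (ε : ℝ) (hε0 : 0 < ε) (hε1 : ε < 1/8) :
    ∃ N : ℕ, ∀ n ≥ N, ∀ f β : Fin n → Fin n, ∀ p q : Fin n,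
      (cyclicPts f).card ≤ alphaN ε n →
      height f ≤ alphaN ε n →
      (∀ x ∈ cyclicPts f, Fmap ε f β x ∈ cyclicPts f) →
      (CycF ε f β).card ≤ betaN ε n →
      (cyclicPts f).sup (heightOf (Fmap ε f β)) ≤ betaN ε n →
      (∀ x ∈ CycF ε f β, β x ∉ cyclicPts f) →
      (∀ x ∈ CycF ε f β, Gmap ε f β x ∈ CycF ε f β) →
      ((CycF ε f β).filter (IsCyclicPt (Gmap ε f β))).card ≤ gammaN ε n →
      (CycF ε f β).sup (heightOf (Gmap ε f β)) ≤ gammaN ε n →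
      (∀ x ∈ (CycF ε f β).filter (IsCyclicPt (Gmap ε f β)), β (β x) ∉ Sset ε f β) →
      p ∈ (CycF ε f β).filter (IsCyclicPt (Gmap ε f β)) →
      q ∈ (CycF ε f β).filter (IsCyclicPt (Gmap ε f β)) →
      (((Finset.univ : Finset (Fin n → Fin n)).filter
          (fun c => ∀ j ≤ lambdaN ε n,
            act (extAut ε f β c) (List.replicate j Letter.b ++ wWord ε n) p ≠
            act (extAut ε f β c) (List.replicate j Letter.b ++ wWord ε n) q)).card : ℝ)
        / (Fintype.card (Fin n → Fin n) : ℝ)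
        ≤ 6 * (n : ℝ) ^ (-(3/8 : ℝ) + 5*ε) :=
  synchronize_pair_bound_general ε hε0
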